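/- Let n : ℝ³ → ℝ³ be smooth with |n| = 1, and set W_{p_α^l} the derivative of W(n,p) = k₁(div n)² + k₂|n×curl n|² + k₃(n·curl n)² in the gradient variable. Then the pointwise identity (∇_α W_{p_α^l})·n^l = −2k₂|∇n|² − 2(k₃−k₂)(n·curl n)² − 2(k₁−k₂)(div n)² + 2(k₁−k₂)∇_l(n^l div n) holds. -/

import Mathlib

open Matrix

/-- Partial derivative in the `i`-th coordinate direction of `f : ℝ³ → ℝ`. -/
noncomputable def pd3 (i : Fin 3) (f : (Fin 3 → ℝ) → ℝ) (x : Fin 3 → ℝ) : ℝ :=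
  fderiv ℝ f x (Pi.single i 1)

/-- Gradient of a scalar function on `ℝ³`. -/
noncomputable def grad3 (f : (Fin 3 → ℝ) → ℝ) (x : Fin 3 → ℝ) : Fin 3 → ℝ :=
  fun i => pd3 i f x

/-- Divergence of a vector field on `ℝ³`. -/
noncomputable def div3 (u : (Fin 3 → ℝ) → Fin 3 → ℝ) (x : Fin 3 → ℝ) : ℝ :=
  ∑ i, pd3 i (fun y => u y i) x

/-- Curl of a vector field on `ℝ³`. -/
noncomputable def curl3 (u : (Fin 3 → ℝ) → Fin 3 → ℝ) (x : Fin 3 → ℝ) : Fin 3 → ℝ :=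
  ![pd3 1 (fun y => u y 2) x - pd3 2 (fun y => u y 1) x,
    pd3 2 (fun y => u y 0) x - pd3 0 (fun y => u y 2) x,
    pd3 0 (fun y => u y 1) x - pd3 1 (fun y => u y 0) x]

/-- Componentwise Laplacian of a vector field on `ℝ³`. -/
noncomputable def lap3 (u : (Fin 3 → ℝ) → Fin 3 → ℝ) (x : Fin 3 → ℝ) : Fin 3 → ℝ :=
  fun l => ∑ i, pd3 i (fun y => pd3 i (fun z => u z l) y) x

section
variable {n : (Fin 3 → ℝ) → Fin 3 → ℝ}

lemma pd3_add {f g : (Fin 3 → ℝ) → ℝ} (hf : Differentiable ℝ f) (hg : Differentiable ℝ g)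
    (i : Fin 3) (x : Fin 3 → ℝ) :
    pd3 i (fun y => f y + g y) x = pd3 i f x + pd3 i g x := by
  simp [pd3, fderiv_fun_add (hf x) (hg x)]

lemma pd3_sub {f g : (Fin 3 → ℝ) → ℝ} (hf : Differentiable ℝ f) (hg : Differentiable ℝ g)
    (i : Fin 3) (x : Fin 3 → ℝ) :
    pd3 i (fun y => f y - g y) x = pd3 i f x - pd3 i g x := by
  simp [pd3, fderiv_fun_sub (hf x) (hg x)]

lemma pd3_mul {f g : (Fin 3 → ℝ) → ℝ} (hf : Differentiable ℝ f) (hg : Differentiable ℝ g)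
    (i : Fin 3) (x : Fin 3 → ℝ) :
    pd3 i (fun y => f y * g y) x = pd3 i f x * g x + f x * pd3 i g x := by
  simp [pd3, fderiv_fun_mul (hf x) (hg x)]; ring

lemma pd3_const (c : ℝ) (i : Fin 3) (x : Fin 3 → ℝ) : pd3 i (fun _ => c) x = 0 := by
  simp [pd3]

lemma contDiff_pd3 {f : (Fin 3 → ℝ) → ℝ} (hf : ContDiff ℝ (⊤ : ℕ∞) f) (i : Fin 3) :
    ContDiff ℝ (⊤ : ℕ∞) (fun y => pd3 i f y) :=
  (hf.fderiv_right (by simp)).clm_apply contDiff_const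

lemma pd3_comm {f : (Fin 3 → ℝ) → ℝ} (hf : ContDiff ℝ (⊤ : ℕ∞) f) (i j : Fin 3) (x : Fin 3 → ℝ) :
    pd3 i (fun y => pd3 j f y) x = pd3 j (fun y => pd3 i f y) x := by
  have hd : Differentiable ℝ (fderiv ℝ f) := (hf.fderiv_right (m := (⊤ : ℕ∞)) (by simp)).differentiable (by simp)
  have h1 : ∀ (v : Fin 3 → ℝ) (w : Fin 3 → ℝ),
      fderiv ℝ (fun y => fderiv ℝ f y v) x w = fderiv ℝ (fderiv ℝ f) x w v := by
    intro v w
    rw [fderiv_clm_apply (hd x) (differentiableAt_const v)]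
    simp
  have hsym := second_derivative_symmetric (f' := fderiv ℝ f)
    (fun y => (hf.differentiable (by simp) y).hasFDerivAt) ((hd x).hasFDerivAt)
    (Pi.single i 1) (Pi.single j 1)
  simp only [pd3, h1]
  rw [hsym]

section
variable {n : (Fin 3 → ℝ) → Fin 3 → ℝ}

lemma nc_cd (hreg : ContDiff ℝ (⊤ : ℕ∞) n) (j : Fin 3) : ContDiff ℝ (⊤ : ℕ∞) (fun y => n y j) :=
  contDiff_pi.1 hreg j

lemma nc_d (hreg : ContDiff ℝ (⊤ : ℕ∞) n) (j : Fin 3) : Differentiable ℝ (fun y => n y j) :=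
  (nc_cd hreg j).differentiable (by simp)

lemma orth1 (hreg : ContDiff ℝ (⊤ : ℕ∞) n) (hunit : ∀ x, n x ⬝ᵥ n x = 1) (i : Fin 3) (x : Fin 3 → ℝ) :
    n x 0 * pd3 i (fun z => n z 0) x + n x 1 * pd3 i (fun z => n z 1) x
      + n x 2 * pd3 i (fun z => n z 2) x = 0 := by
  have hd := nc_d hreg
  have h1 : (fun y => n y 0 * n y 0 + n y 1 * n y 1 + n y 2 * n y 2) = fun _ => (1:ℝ) := by
    funext y
    have := hunit y
    simpa [dotProduct, Fin.sum_univ_three] using this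
  have h2 : pd3 i (fun y => n y 0 * n y 0 + n y 1 * n y 1 + n y 2 * n y 2) x = 0 := by
    rw [h1, pd3_const]
  rw [pd3_add (((hd 0).fun_mul (hd 0)).fun_add ((hd 1).fun_mul (hd 1))) ((hd 2).fun_mul (hd 2)),
      pd3_add ((hd 0).fun_mul (hd 0)) ((hd 1).fun_mul (hd 1)),
      pd3_mul (hd 0) (hd 0), pd3_mul (hd 1) (hd 1), pd3_mul (hd 2) (hd 2)] at h2
  linarith

lemma orth2 (hreg : ContDiff ℝ (⊤ : ℕ∞) n) (hunit : ∀ x, n x ⬝ᵥ n x = 1) (i : Fin 3) (x : Fin 3 → ℝ) :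
    (pd3 i (fun z => n z 0) x)^2 + (pd3 i (fun z => n z 1) x)^2 + (pd3 i (fun z => n z 2) x)^2
      + (n x 0 * pd3 i (fun y => pd3 i (fun z => n z 0) y) x
        + n x 1 * pd3 i (fun y => pd3 i (fun z => n z 1) y) x
        + n x 2 * pd3 i (fun y => pd3 i (fun z => n z 2) y) x) = 0 := by
  have hd := nc_d hreg
  have hpd : ∀ j, Differentiable ℝ (fun y => pd3 i (fun z => n z j) y) := fun j =>
    (contDiff_pd3 (nc_cd hreg j) i).differentiable (by simp)
  have h1 : (fun y => n y 0 * pd3 i (fun z => n z 0) y + n y 1 * pd3 i (fun z => n z 1) y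
      + n y 2 * pd3 i (fun z => n z 2) y) = fun _ => (0:ℝ) := by
    funext y; exact orth1 hreg hunit i y
  have h2 : pd3 i (fun y => n y 0 * pd3 i (fun z => n z 0) y + n y 1 * pd3 i (fun z => n z 1) y
      + n y 2 * pd3 i (fun z => n z 2) y) x = 0 := by
    rw [h1, pd3_const]
  rw [pd3_add (((hd 0).fun_mul (hpd 0)).fun_add ((hd 1).fun_mul (hpd 1))) ((hd 2).fun_mul (hpd 2)),
      pd3_add ((hd 0).fun_mul (hpd 0)) ((hd 1).fun_mul (hpd 1)),
      pd3_mul (hd 0) (hpd 0), pd3_mul (hd 1) (hpd 1), pd3_mul (hd 2) (hpd 2)] at h2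
  nlinarith [h2]

-- Laplacian dot n
lemma lap_dot (hreg : ContDiff ℝ (⊤ : ℕ∞) n) (hunit : ∀ x, n x ⬝ᵥ n x = 1) (x : Fin 3 → ℝ) :
    lap3 n x ⬝ᵥ n x = -(∑ i, ∑ j, (pd3 i (fun z => n z j) x) ^ 2) := by
  have o0 := orth2 hreg hunit 0 x
  have o1 := orth2 hreg hunit 1 x
  have o2 := orth2 hreg hunit 2 x
  simp only [lap3, dotProduct, Fin.sum_univ_three]
  linarith


lemma div3_eq : div3 n = fun y => pd3 0 (fun z => n z 0) y + pd3 1 (fun z => n z 1) y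
    + pd3 2 (fun z => n z 2) y := by
  funext y; simp [div3, Fin.sum_univ_three]

lemma div3_cd (hreg : ContDiff ℝ (⊤ : ℕ∞) n) : ContDiff ℝ (⊤ : ℕ∞) (div3 n) := by
  rw [div3_eq]
  exact ((contDiff_pd3 (nc_cd hreg 0) 0).add (contDiff_pd3 (nc_cd hreg 1) 1)).add
    (contDiff_pd3 (nc_cd hreg 2) 2)

lemma grad_dot (hreg : ContDiff ℝ (⊤ : ℕ∞) n) (x : Fin 3 → ℝ) :
    grad3 (div3 n) x ⬝ᵥ n x = div3 (fun y => div3 n y • n y) x - (div3 n x) ^ 2 := by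
  have hd := nc_d hreg
  set d := div3 n with hdset
  have hdd : Differentiable ℝ d := (div3_cd hreg).differentiable (by simp)
  have hc : ∀ l : Fin 3, (fun y => (d y • n y) l) = fun y => d y * n y l := by
    intro l; funext y; simp
  have hdx : d x = pd3 0 (fun z => n z 0) x + pd3 1 (fun z => n z 1) x
      + pd3 2 (fun z => n z 2) x := by rw [hdset, div3_eq]
  simp only [div3, grad3, dotProduct, Fin.sum_univ_three, hc,
    pd3_mul hdd (hd 0), pd3_mul hdd (hd 1), pd3_mul hdd (hd 2), hdx]
  ring

lemma curl_smul_dot (hreg : ContDiff ℝ (⊤ : ℕ∞) n) {f : (Fin 3 → ℝ) → ℝ} (hf : Differentiable ℝ f)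
    (x : Fin 3 → ℝ) :
    curl3 (fun y => f y • n y) x ⬝ᵥ n x = f x * (curl3 n x ⬝ᵥ n x) := by
  have hd := nc_d hreg
  have hc : ∀ l : Fin 3, (fun y => (f y • n y) l) = fun y => f y * n y l := by
    intro l; funext y; simp
  simp only [curl3, dotProduct, Fin.sum_univ_three, Matrix.cons_val_zero, Matrix.cons_val_one,
    Matrix.head_cons, Matrix.cons_val_two, Matrix.tail_cons, hc,
    pd3_mul hf (hd 0), pd3_mul hf (hd 1), pd3_mul hf (hd 2)]
  ring

lemma bac_cab (v u : Fin 3 → ℝ) (hv : v ⬝ᵥ v = 1) :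
    v ⨯₃ (u ⨯₃ v) = u - (u ⬝ᵥ v) • v := by
  have h : v 0 * v 0 + v 1 * v 1 + v 2 * v 2 = 1 := by
    simpa [dotProduct, Fin.sum_univ_three] using hv
  funext i
  fin_cases i <;> simp [cross_apply, dotProduct, Fin.sum_univ_three]
  · linear_combination u 0 * h
  · linear_combination u 1 * h
  · linear_combination u 2 * h

lemma hDD3 (hreg : ContDiff ℝ (⊤ : ℕ∞) n) (i j : Fin 3) :
    Differentiable ℝ (fun y => pd3 i (fun z => n z j) y) :=
  (contDiff_pd3 (nc_cd hreg j) i).differentiable (by simp)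

lemma curl_sub_smul_dot (hreg : ContDiff ℝ (⊤ : ℕ∞) n) {f : (Fin 3 → ℝ) → ℝ}
    (hf : Differentiable ℝ f) (x : Fin 3 → ℝ) :
    curl3 (fun y => curl3 n y - f y • n y) x ⬝ᵥ n x
      = grad3 (div3 n) x ⬝ᵥ n x - lap3 n x ⬝ᵥ n x - f x * (curl3 n x ⬝ᵥ n x) := by
  have comm : ∀ (i j q : Fin 3), pd3 i (fun y => pd3 j (fun z => n z q) y) x
      = pd3 j (fun y => pd3 i (fun z => n z q) y) x := fun i j q => pd3_comm (nc_cd hreg q) i j x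
  have hstep : ∀ (a p q r s l : Fin 3),
      pd3 a (fun y => pd3 p (fun z => n z q) y - pd3 r (fun z => n z s) y - f y * n y l) x
        = pd3 a (fun y => pd3 p (fun z => n z q) y) x - pd3 a (fun y => pd3 r (fun z => n z s) y) x
          - (pd3 a f x * n x l + f x * pd3 a (fun z => n z l) x) := by
    intro a p q r s l
    rw [pd3_sub ((hDD3 hreg p q).fun_sub (hDD3 hreg r s)) (hf.fun_mul (nc_d hreg l)),
      pd3_sub (hDD3 hreg p q) (hDD3 hreg r s), pd3_mul hf (nc_d hreg l)]
  have hgrad : ∀ a : Fin 3, pd3 a (div3 n) x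
      = pd3 a (fun y => pd3 0 (fun z => n z 0) y) x + pd3 a (fun y => pd3 1 (fun z => n z 1) y) x
        + pd3 a (fun y => pd3 2 (fun z => n z 2) y) x := by
    intro a
    rw [div3_eq, pd3_add ((hDD3 hreg 0 0).fun_add (hDD3 hreg 1 1)) (hDD3 hreg 2 2),
      pd3_add (hDD3 hreg 0 0) (hDD3 hreg 1 1)]
  simp only [curl3, Matrix.cons_val_zero, Matrix.cons_val_one, Matrix.head_cons,
    Matrix.cons_val_two, Matrix.tail_cons, Pi.sub_apply, Pi.smul_apply, smul_eq_mul,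
    dotProduct, Fin.sum_univ_three, grad3, lap3]
  simp only [hstep, hgrad]
  simp only [comm 1 0 0, comm 1 0 1, comm 1 0 2, comm 2 0 0, comm 2 0 1, comm 2 0 2,
    comm 2 1 0, comm 2 1 1, comm 2 1 2]
  ring

lemma curl0_eq : (fun y => curl3 n y 0)
    = fun y => pd3 1 (fun z => n z 2) y - pd3 2 (fun z => n z 1) y := by
  funext y; simp [curl3]

lemma curl1_eq : (fun y => curl3 n y 1)
    = fun y => pd3 2 (fun z => n z 0) y - pd3 0 (fun z => n z 2) y := by
  funext y; simp [curl3]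

lemma curl2_eq : (fun y => curl3 n y 2)
    = fun y => pd3 0 (fun z => n z 1) y - pd3 1 (fun z => n z 0) y := by
  funext y; simp [curl3]

lemma cdotn_d (hreg : ContDiff ℝ (⊤ : ℕ∞) n) :
    Differentiable ℝ (fun y => curl3 n y ⬝ᵥ n y) := by
  have h0 : Differentiable ℝ (fun y => curl3 n y 0) := by
    rw [curl0_eq]; exact (hDD3 hreg 1 2).sub (hDD3 hreg 2 1)
  have h1 : Differentiable ℝ (fun y => curl3 n y 1) := by
    rw [curl1_eq]; exact (hDD3 hreg 2 0).sub (hDD3 hreg 0 2)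
  have h2 : Differentiable ℝ (fun y => curl3 n y 2) := by
    rw [curl2_eq]; exact (hDD3 hreg 0 1).sub (hDD3 hreg 1 0)
  have h : (fun y => curl3 n y ⬝ᵥ n y)
      = fun y => curl3 n y 0 * n y 0 + curl3 n y 1 * n y 1 + curl3 n y 2 * n y 2 := by
    funext y; simp [dotProduct, Fin.sum_univ_three]
  rw [h]
  exact ((h0.mul (nc_d hreg 0)).add (h1.mul (nc_d hreg 1))).add (h2.mul (nc_d hreg 2))


end

/-- For a smooth unit vector field `n : ℝ³ → S²` and `a = min{k₁,k₂,k₃}`, the field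
`∇_α W_{p_α^l} = 2aΔn + 2(k₁−a)∇div n − 2(k₂−a)curl(n×(curl n×n)) − 2(k₃−a)curl((curl n·n)n)`
satisfies `(∇_α W_{p_α^l})·n = −2k₂|∇n|² − 2(k₃−k₂)(n·curl n)² − 2(k₁−k₂)(div n)²
+ 2(k₁−k₂)∇_l(n^l div n)`. -/
theorem divW_dot_n (k₁ k₂ k₃ : ℝ) (hk₁ : 0 < k₁) (hk₂ : 0 < k₂) (hk₃ : 0 < k₃)
    (n G : (Fin 3 → ℝ) → Fin 3 → ℝ) (hreg : ContDiff ℝ (⊤ : ℕ∞) n)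
    (hunit : ∀ x, n x ⬝ᵥ n x = 1)
    (hG : ∀ x, G x =
      (2 * min (min k₁ k₂) k₃) • lap3 n x
        + (2 * (k₁ - min (min k₁ k₂) k₃)) • grad3 (div3 n) x
        - (2 * (k₂ - min (min k₁ k₂) k₃)) • curl3 (fun y => n y ⨯₃ (curl3 n y ⨯₃ n y)) x
        - (2 * (k₃ - min (min k₁ k₂) k₃)) • curl3 (fun y => (curl3 n y ⬝ᵥ n y) • n y) x) :
    ∀ x, G x ⬝ᵥ n x =
      -2 * k₂ * (∑ i, ∑ j, (pd3 i (fun z => n z j) x) ^ 2)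
        - 2 * (k₃ - k₂) * (n x ⬝ᵥ curl3 n x) ^ 2
        - 2 * (k₁ - k₂) * (div3 n x) ^ 2
        + 2 * (k₁ - k₂) * div3 (fun y => div3 n y • n y) x := by
  intro x
  have hfe : (fun y => n y ⨯₃ (curl3 n y ⨯₃ n y))
      = fun y => curl3 n y - (curl3 n y ⬝ᵥ n y) • n y := by
    funext y; exact bac_cab (n y) (curl3 n y) (hunit y)
  rw [hG x, hfe]
  rw [sub_dotProduct, sub_dotProduct, add_dotProduct,
    smul_dotProduct, smul_dotProduct, smul_dotProduct,
    smul_dotProduct]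
  rw [lap_dot hreg hunit x, grad_dot hreg x,
    curl_sub_smul_dot hreg (cdotn_d hreg) x, curl_smul_dot hreg (cdotn_d hreg) x,
    lap_dot hreg hunit x, grad_dot hreg x]
  rw [dotProduct_comm (n x) (curl3 n x)]
  simp only [smul_eq_mul]
  ring
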